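/- Let U be a unitary on ℂ^d⊗ℂ^d and define H = Σ_{i=1}^{N−1} (σ⁻_i σ⁺_{i+1} ⊗ U_{i,i+1} + σ⁺_i σ⁻_{i+1} ⊗ U†_{i,i+1}) on head qubits and data qudits. Then H is Hermitian, and in the single-excitation head sector, e^{−iHt} applied to |1⟩^a⊗|ψ⟩ produces, in the component where the head is at site N, the state |N⟩^a ⊗ (U_{N−1,N}⋯U_{1,2}|ψ⟩) times the amplitude f_N(t) for transfer in the bare hopping chain; i.e., ⟨N|^a e^{−iHt} |1⟩^a⊗|ψ⟩ = f_N(t)·U_{N−1,N}⋯U_{1,2}|ψ⟩ where f_N(t) = ⟨N|e^{−iAt}|1⟩ with A the path adjacency matrix. -/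

import Mathlib

/-!
Each bond term of `H` is Hermitian, hence so is `H`. For the transfer, let `T` be the matrix whose
column `i` is `|i⟩^a ⊗ U_{i-1,i} ⋯ U_{1,2}|ψ⟩`. The term of the bond `(i, i+1)` moves the excitation
from `i` to `i+1` while applying `U_{i,i+1}`, and back while applying `U†_{i,i+1}`; as `U†U = 1`, it
swaps columns `i` and `i+1` of `T`. Hence `H T = T A`, this intertwining passes to the exponential
series, `e^{-iHt} T = T e^{-iAt}`, and column `0` of this identity at head configuration `|N⟩^a` is
the transfer formula.
-/

open Matrix

variable (N d : ℕ)

/-- Head configuration with a single excitation at site `i`. -/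
def headState (i : Fin N) : (Fin N → Fin 2) → ℂ :=
  fun f => if f = (fun k => if k = i then 1 else 0) then 1 else 0

/-- Tensor product of a head vector and a data vector. -/
def tensorState (φ : (Fin N → Fin 2) → ℂ) (ψ : (Fin N → Fin d) → ℂ) :
    ((Fin N → Fin 2) × (Fin N → Fin d)) → ℂ :=
  fun p => φ p.1 * ψ p.2

/-- The two-site gate `U` applied to data qudits `i, j`:
`(U_{i,j}ψ)(g) = Σ_x U_{(g i, g j), x} ψ(g[i ↦ x₁][j ↦ x₂])`. -/
noncomputable def applyU (U : Matrix (Fin d × Fin d) (Fin d × Fin d) ℂ) (i j : Fin N)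
    (ψ : (Fin N → Fin d) → ℂ) : (Fin N → Fin d) → ℂ :=
  fun g => ∑ x : Fin d × Fin d,
    U (g i, g j) x * ψ (Function.update (Function.update g i x.1) j x.2)

/-- The product `U_{k,k+1} ⋯ U_{1,2}` applied to a data vector (0-indexed: step `k`
acts on sites `k, k+1`). -/
noncomputable def prodU (U : Matrix (Fin d × Fin d) (Fin d × Fin d) ℂ)
    (ψ : (Fin N → Fin d) → ℂ) : ℕ → ((Fin N → Fin d) → ℂ)
  | 0 => ψ
  | k + 1 =>
    if h : k + 1 < N then applyU N d U ⟨k, by omega⟩ ⟨k + 1, h⟩ (prodU U ψ k)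
    else prodU U ψ k

/-- The controlled-unitary hopping Hamiltonian
`H = Σ_{i=1}^{N−1} σ⁻_i σ⁺_{i+1} ⊗ U_{i,i+1} + σ⁺_i σ⁻_{i+1} ⊗ U†_{i,i+1}`
on head qubits and data qudits. -/
noncomputable def uqiHU (U : Matrix (Fin d × Fin d) (Fin d × Fin d) ℂ) :
    Matrix ((Fin N → Fin 2) × (Fin N → Fin d))
      ((Fin N → Fin 2) × (Fin N → Fin d)) ℂ :=
  fun p q => ∑ i ∈ (Finset.range (N - 1)).attach,
    have hi : i.1 < N - 1 := Finset.mem_range.mp i.2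
    let a : Fin N := ⟨i.1, by omega⟩
    let b : Fin N := ⟨i.1 + 1, by omega⟩
    (if ∀ k, k ≠ a → k ≠ b → p.1 k = q.1 k then 1 else 0) *
    (if ∀ k, k ≠ a → k ≠ b → p.2 k = q.2 k then 1 else 0) *
    ((if p.1 a = 0 ∧ p.1 b = 1 ∧ q.1 a = 1 ∧ q.1 b = 0 then
        U (p.2 a, p.2 b) (q.2 a, q.2 b) else 0) +
     (if p.1 a = 1 ∧ p.1 b = 0 ∧ q.1 a = 0 ∧ q.1 b = 1 then
        Uᴴ (p.2 a, p.2 b) (q.2 a, q.2 b) else 0))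

/-- The adjacency matrix of the path graph on `N` vertices, over ℂ. -/
def pathMatrix : Matrix (Fin N) (Fin N) ℂ :=
  fun i j => if i.1 + 1 = j.1 ∨ j.1 + 1 = i.1 then 1 else 0

open scoped Norms.Operator in
theorem Matrix.exp_mul_eq_mul_exp_of_mul_eq {𝕂 P Q : Type*} [RCLike 𝕂]
    [Fintype P] [DecidableEq P] [Fintype Q] [DecidableEq Q]
    {M : Matrix P P 𝕂} {B : Matrix Q Q 𝕂} {T : Matrix P Q 𝕂} (h : M * T = T * B) :
    NormedSpace.exp M * T = T * NormedSpace.exp B := by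
  have hpow (n : ℕ) : M ^ n * T = T * B ^ n := by
    induction n with
    | zero => simp
    | succ n ih =>
      rw [pow_succ, Matrix.mul_assoc, h, ← Matrix.mul_assoc, ih, Matrix.mul_assoc, pow_succ]
  have hM := (NormedSpace.exp_series_hasSum_exp' (𝕂 := 𝕂) M).map
    (Matrix.addMonoidHomMulRight T) (continuous_id.matrix_mul continuous_const)
  have hB := (NormedSpace.exp_series_hasSum_exp' (𝕂 := 𝕂) B).map
    (Matrix.addMonoidHomMulLeft T) (continuous_const.matrix_mul continuous_id)
  refine hM.unique (hB.congr_fun fun n => ?_)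
  simp [Matrix.smul_mul, Matrix.mul_smul, hpow]

/- The decidability instance is a binder, so that the lemma matches sums elaborated with any
instance, e.g. `Nat.decidableForallFin` for `ι = Fin n`. -/
theorem sum_ite_agreeOff_mul {ι α R : Type*} [Fintype ι] [DecidableEq ι] [Fintype α]
    [NonAssocSemiring R] {a b : ι} (hab : a ≠ b) (g : ι → α)
    [∀ g' : ι → α, Decidable (∀ k, k ≠ a → k ≠ b → g k = g' k)] (F : (ι → α) → R) :
    ∑ g' : ι → α, (if ∀ k, k ≠ a → k ≠ b → g k = g' k then 1 else 0) * F g' =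
      ∑ x : α × α, F (Function.update (Function.update g a x.1) b x.2) := by
  have hupdate {g' : ι → α} (hg' : ∀ k, k ≠ a → k ≠ b → g k = g' k) :
      Function.update (Function.update g a (g' a)) b (g' b) = g' := by
    funext k
    by_cases hkb : k = b
    · subst hkb; simp
    by_cases hka : k = a
    · subst hka; simp [hkb]
    · simp [hka, hkb, hg' k hka hkb]
  simp only [ite_mul, one_mul, zero_mul, Finset.sum_ite, Finset.sum_const_zero, add_zero]
  refine Finset.sum_nbij' (fun g' => (g' a, g' b))
    (fun x => Function.update (Function.update g a x.1) b x.2) ?_ ?_ ?_ ?_ ?_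
  · simp
  · intro x _
    simp only [Finset.mem_filter, Finset.mem_univ, true_and]
    intro k hka hkb
    simp [hka, hkb]
  · intro g' hg'
    exact hupdate (Finset.mem_filter.mp hg').2
  · intro x _
    simp [hab]
  · intro g' hg'
    rw [hupdate (Finset.mem_filter.mp hg').2]

section

variable {N d}

theorem sum_ite_agreeOff_mul_eq_applyU (M : Matrix (Fin d × Fin d) (Fin d × Fin d) ℂ)
    {a b : Fin N} (hab : a ≠ b) (φ : (Fin N → Fin d) → ℂ) (g : Fin N → Fin d) :
    ∑ g' : Fin N → Fin d, (if ∀ k, k ≠ a → k ≠ b → g k = g' k then 1 else 0) *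
      (M (g a, g b) (g' a, g' b) * φ g') = applyU N d M a b φ g := by
  refine (sum_ite_agreeOff_mul (R := ℂ) hab g _).trans ?_
  simp [applyU, hab]

theorem applyU_mul (M M' : Matrix (Fin d × Fin d) (Fin d × Fin d) ℂ) {a b : Fin N} (hab : a ≠ b)
    (φ : (Fin N → Fin d) → ℂ) :
    applyU N d M a b (applyU N d M' a b φ) = applyU N d (M * M') a b φ := by
  have hupdate (g : Fin N → Fin d) (x y : Fin d × Fin d) :
      Function.update (Function.update (Function.update (Function.update g a x.1) b x.2) a y.1)
        b y.2 = Function.update (Function.update g a y.1) b y.2 := by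
    rw [Function.update_comm hab x.1 x.2 g, Function.update_idem,
      Function.update_comm hab.symm x.2 y.1 g, Function.update_idem]
  funext g
  simp only [applyU, Matrix.mul_apply, Function.update_self, Function.update_of_ne hab, hupdate,
    Finset.mul_sum, Finset.sum_mul]
  rw [Finset.sum_comm]
  refine Finset.sum_congr rfl fun y _ => Finset.sum_congr rfl fun x _ => ?_
  ring

theorem applyU_one {a b : Fin N} (φ : (Fin N → Fin d) → ℂ) : applyU N d 1 a b φ = φ := by
  funext g
  simp [applyU, Matrix.one_apply]

theorem applyU_conjTranspose_applyU {U : Matrix (Fin d × Fin d) (Fin d × Fin d) ℂ}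
    (hU : U ∈ Matrix.unitaryGroup (Fin d × Fin d) ℂ) {a b : Fin N} (hab : a ≠ b)
    (φ : (Fin N → Fin d) → ℂ) : applyU N d Uᴴ a b (applyU N d U a b φ) = φ := by
  rw [applyU_mul _ _ hab, ← Matrix.star_eq_conjTranspose, Matrix.mem_unitaryGroup_iff'.mp hU,
    applyU_one]

theorem prodU_eq_applyU_prodU (U : Matrix (Fin d × Fin d) (Fin d × Fin d) ℂ)
    (ψ : (Fin N → Fin d) → ℂ) {a b : Fin N} (hab : a.1 + 1 = b.1) :
    prodU N d U ψ b = applyU N d U a b (prodU N d U ψ a) := by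
  obtain ⟨b, hb⟩ := b
  subst hab
  simp [prodU, hb]

def singleExcitation (i : Fin N) : Fin N → Fin 2 := fun k => if k = i then 1 else 0

theorem singleExcitation_injective : Function.Injective (singleExcitation (N := N)) := by
  intro i j h
  simpa [singleExcitation] using congrFun h i

theorem headState_apply (i : Fin N) (f : Fin N → Fin 2) :
    headState N i f = if f = singleExcitation i then 1 else 0 := rfl

theorem singleExcitation_hop_iff {a b j : Fin N} (hab : a ≠ b) (f : Fin N → Fin 2) :
    ((∀ k, k ≠ a → k ≠ b → f k = singleExcitation j k) ∧ f a = 0 ∧ f b = 1 ∧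
      singleExcitation j a = 1 ∧ singleExcitation j b = 0) ↔ j = a ∧ f = singleExcitation b := by
  unfold singleExcitation
  constructor
  · rintro ⟨hoff, ha, hb, hja, -⟩
    obtain rfl : a = j := by simpa using hja
    refine ⟨rfl, funext fun k => ?_⟩
    grind
  · rintro ⟨rfl, rfl⟩
    grind

noncomputable def bondTerm (U : Matrix (Fin d × Fin d) (Fin d × Fin d) ℂ) (a b : Fin N) :
    Matrix ((Fin N → Fin 2) × (Fin N → Fin d)) ((Fin N → Fin 2) × (Fin N → Fin d)) ℂ :=
  fun p q =>
    (if ∀ k, k ≠ a → k ≠ b → p.1 k = q.1 k then 1 else 0) *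
    (if ∀ k, k ≠ a → k ≠ b → p.2 k = q.2 k then 1 else 0) *
    ((if p.1 a = 0 ∧ p.1 b = 1 ∧ q.1 a = 1 ∧ q.1 b = 0 then
        U (p.2 a, p.2 b) (q.2 a, q.2 b) else 0) +
     (if p.1 a = 1 ∧ p.1 b = 0 ∧ q.1 a = 0 ∧ q.1 b = 1 then
        Uᴴ (p.2 a, p.2 b) (q.2 a, q.2 b) else 0))

theorem uqiHU_eq_sum_bondTerm (U : Matrix (Fin d × Fin d) (Fin d × Fin d) ℂ) :
    uqiHU N d U = ∑ i ∈ (Finset.range (N - 1)).attach,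
      bondTerm U ⟨i, by grind⟩ ⟨i + 1, by grind⟩ := by
  ext p q
  rw [Matrix.sum_apply]
  rfl

theorem bondTerm_isHermitian (U : Matrix (Fin d × Fin d) (Fin d × Fin d) ℂ) (a b : Fin N) :
    (bondTerm U a b).IsHermitian := by
  ext p q
  simp only [conjTranspose_apply, bondTerm, star_mul', star_add, apply_ite star, star_one,
    star_zero, star_star, eq_comm (a := p.1 _), eq_comm (a := p.2 _)]
  grind

theorem uqiHU_isHermitian (U : Matrix (Fin d × Fin d) (Fin d × Fin d) ℂ) :
    (uqiHU N d U).IsHermitian := by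
  rw [uqiHU_eq_sum_bondTerm]
  exact isSelfAdjoint_sum _ fun _ _ => bondTerm_isHermitian U _ _

theorem bondTerm_mulVec_tensorState_headState (U : Matrix (Fin d × Fin d) (Fin d × Fin d) ℂ)
    {a b : Fin N} (hab : a ≠ b) (j : Fin N) (φ : (Fin N → Fin d) → ℂ)
    (f : Fin N → Fin 2) (g : Fin N → Fin d) :
    (bondTerm U a b *ᵥ tensorState N d (headState N j) φ) (f, g) =
      (if j = a then tensorState N d (headState N b) (applyU N d U a b φ) (f, g) else 0) +
      (if j = b then tensorState N d (headState N a) (applyU N d Uᴴ a b φ) (f, g) else 0) := by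
  have hhop_ba : ((∀ k, k ≠ a → k ≠ b → f k = singleExcitation j k) ∧ f a = 1 ∧ f b = 0 ∧
      singleExcitation j a = 0 ∧ singleExcitation j b = 1) ↔ j = b ∧ f = singleExcitation a := by
    rw [← singleExcitation_hop_iff hab.symm]
    exact ⟨fun ⟨h, h₁, h₂, h₃, h₄⟩ => ⟨fun k hb ha => h k ha hb, h₂, h₁, h₄, h₃⟩,
      fun ⟨h, h₁, h₂, h₃, h₄⟩ => ⟨fun k ha hb => h k hb ha, h₂, h₁, h₄, h₃⟩⟩
  calc (bondTerm U a b *ᵥ tensorState N d (headState N j) φ) (f, g)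
      = ∑ g', bondTerm U a b (f, g) (singleExcitation j, g') * φ g' := by
        simp [mulVec, dotProduct, Fintype.sum_prod_type, tensorState, headState_apply]
    _ = (if (∀ k, k ≠ a → k ≠ b → f k = singleExcitation j k) ∧ f a = 0 ∧ f b = 1 ∧
            singleExcitation j a = 1 ∧ singleExcitation j b = 0 then applyU N d U a b φ g else 0) +
        (if (∀ k, k ≠ a → k ≠ b → f k = singleExcitation j k) ∧ f a = 1 ∧ f b = 0 ∧
            singleExcitation j a = 0 ∧ singleExcitation j b = 1 then applyU N d Uᴴ a b φ g
          else 0) := by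
        simp only [bondTerm, ← sum_ite_agreeOff_mul_eq_applyU _ hab]
        by_cases hagree : ∀ k, k ≠ a → k ≠ b → f k = singleExcitation j k
        · simp only [if_pos hagree, one_mul, and_iff_right hagree]
          split_ifs <;> simp [add_mul, mul_add, Finset.sum_add_distrib]
        · simp only [if_neg hagree, zero_mul, Finset.sum_const_zero,
            if_neg (not_and_of_not_left _ hagree), add_zero]
    _ = _ := by
        simp only [singleExcitation_hop_iff hab, hhop_ba]
        simp [tensorState, headState_apply, ite_and]

/- The matrix `T` of the header: column `i` is `|i⟩^a ⊗ U_{i-1,i} ⋯ U_{1,2}|ψ⟩`. -/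
noncomputable def chainEmbedding (U : Matrix (Fin d × Fin d) (Fin d × Fin d) ℂ)
    (ψ : (Fin N → Fin d) → ℂ) : Matrix ((Fin N → Fin 2) × (Fin N → Fin d)) (Fin N) ℂ :=
  Matrix.of fun p i => tensorState N d (headState N i) (prodU N d U ψ i) p

theorem chainEmbedding_mul_apply (U : Matrix (Fin d × Fin d) (Fin d × Fin d) ℂ)
    (ψ : (Fin N → Fin d) → ℂ) (B : Matrix (Fin N) (Fin N) ℂ) (i j : Fin N) (g : Fin N → Fin d) :
    (chainEmbedding U ψ * B) (singleExcitation i, g) j = prodU N d U ψ i g * B i j := by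
  simp [Matrix.mul_apply, chainEmbedding, tensorState, headState_apply,
    singleExcitation_injective.eq_iff]

theorem bondTerm_mul_chainEmbedding {U : Matrix (Fin d × Fin d) (Fin d × Fin d) ℂ}
    (hU : U ∈ Matrix.unitaryGroup (Fin d × Fin d) ℂ) (ψ : (Fin N → Fin d) → ℂ) {a b : Fin N}
    (hab : a.1 + 1 = b.1) :
    bondTerm U a b * chainEmbedding U ψ =
      chainEmbedding U ψ * (single b a (1 : ℂ) + single a b 1) := by
  have hne : a ≠ b := by rintro rfl; omega
  ext ⟨f, g⟩ j
  change (bondTerm U a b *ᵥ tensorState N d (headState N j) (prodU N d U ψ j)) (f, g) = _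
  rw [bondTerm_mulVec_tensorState_headState U hne, Matrix.mul_add]
  rcases eq_or_ne j a with rfl | hja
  · simp [hne, hne.symm, Matrix.mul_apply, Matrix.single_apply, chainEmbedding,
      prodU_eq_applyU_prodU U ψ hab]
  rcases eq_or_ne j b with rfl | hjb
  · simp [hne, hne.symm, Matrix.mul_apply, Matrix.single_apply, chainEmbedding,
      prodU_eq_applyU_prodU U ψ hab, applyU_conjTranspose_applyU hU hne]
  · simp [hja, hjb, hja.symm, hjb.symm, Matrix.mul_apply]

theorem pathMatrix_eq_sum_single :
    pathMatrix N = ∑ i ∈ (Finset.range (N - 1)).attach,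
      (single (⟨i + 1, by grind⟩ : Fin N) ⟨i, by grind⟩ (1 : ℂ) +
        single ⟨i, by grind⟩ ⟨i + 1, by grind⟩ 1) := by
  ext k j
  simp only [pathMatrix, Matrix.sum_apply, Matrix.add_apply, Matrix.single_apply, Fin.ext_iff]
  rw [Finset.sum_attach (Finset.range (N - 1)) fun c =>
    (if c + 1 = k.1 ∧ c = j.1 then (1 : ℂ) else 0) + if c = k.1 ∧ c + 1 = j.1 then 1 else 0]
  simp only [and_comm (a := _ + 1 = _), ite_and, Finset.sum_add_distrib, Finset.sum_ite_eq',
    Finset.mem_range]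
  split_ifs <;> norm_num <;> omega

theorem uqiHU_mul_chainEmbedding {U : Matrix (Fin d × Fin d) (Fin d × Fin d) ℂ}
    (hU : U ∈ Matrix.unitaryGroup (Fin d × Fin d) ℂ) (ψ : (Fin N → Fin d) → ℂ) :
    uqiHU N d U * chainEmbedding U ψ = chainEmbedding U ψ * pathMatrix N := by
  rw [uqiHU_eq_sum_bondTerm, Matrix.sum_mul, pathMatrix_eq_sum_single, Matrix.mul_sum]
  exact Finset.sum_congr rfl fun i _ => bondTerm_mul_chainEmbedding hU ψ rfl

end

/-- `H = Σ σ⁻_i σ⁺_{i+1} ⊗ U_{i,i+1} + h.c.` is Hermitian, and in the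
single-excitation head sector the head-at-site-`N` component of
`e^{−iHt}(|1⟩^a ⊗ |ψ⟩)` is `f_N(t) · U_{N−1,N} ⋯ U_{1,2}|ψ⟩`, where
`f_N(t) = ⟨N|e^{−iAt}|1⟩` is the transfer amplitude of the bare hopping chain
(`A` the path-graph adjacency matrix). -/
theorem uqiHU_hermitian_and_transfer (hN : 0 < N)
    (U : Matrix (Fin d × Fin d) (Fin d × Fin d) ℂ)
    (hU : U ∈ Matrix.unitaryGroup (Fin d × Fin d) ℂ) :
    (uqiHU N d U).IsHermitian ∧
    ∀ (t : ℝ) (ψ : (Fin N → Fin d) → ℂ),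
      (fun g : Fin N → Fin d =>
          (NormedSpace.exp ((-(Complex.I * t)) • uqiHU N d U)).mulVec
            (tensorState N d (headState N ⟨0, hN⟩) ψ)
            ((fun k => if k = (⟨N - 1, by omega⟩ : Fin N) then 1 else 0), g)) =
        fun g : Fin N → Fin d =>
          (NormedSpace.exp ((-(Complex.I * t)) • pathMatrix N))
              ⟨N - 1, by omega⟩ ⟨0, hN⟩ *
            prodU N d U ψ (N - 1) g := by
  refine ⟨uqiHU_isHermitian U, fun t ψ => funext fun g => ?_⟩
  have hexp := Matrix.exp_mul_eq_mul_exp_of_mul_eq (𝕂 := ℂ) (T := chainEmbedding U ψ)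
    (M := (-(Complex.I * t)) • uqiHU N d U) (B := (-(Complex.I * t)) • pathMatrix N)
    (by rw [Matrix.smul_mul, uqiHU_mul_chainEmbedding hU, Matrix.mul_smul])
  have hentry := congrFun (congrFun hexp (singleExcitation ⟨N - 1, by omega⟩, g)) ⟨0, hN⟩
  rw [chainEmbedding_mul_apply] at hentry
  exact hentry.trans (mul_comm _ _)
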